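/- arXiv:1012.3944 — 3 statements merged into one kernel-verified Lean document; each statement's English description precedes it below -/
import Mathlib

section
/- For β > 0, β > log(1+√2) if and only if log(coth(β/2)) < log(1+√2). -/
theorem dual_beta_exchanges_regimes (β : ℝ) (hβ : 0 < β) :
    Real.log (1 + Real.sqrt 2) < β ↔
      Real.log (Real.cosh (β / 2) / Real.sinh (β / 2)) < Real.log (1 + Real.sqrt 2) := by
  have hs2 : (0:ℝ) < Real.sqrt 2 := Real.sqrt_pos.mpr (by norm_num)
  have hs2sq : Real.sqrt 2 * Real.sqrt 2 = 2 := Real.mul_self_sqrt (by norm_num)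
  have hA : (0:ℝ) < 1 + Real.sqrt 2 := by linarith
  set t := Real.exp β with hts
  have ht : 1 < t := by
    rw [hts]; calc (1:ℝ) = Real.exp 0 := Real.exp_zero.symm
    _ < Real.exp β := Real.exp_lt_exp.mpr hβ
  have hp : 0 < Real.exp (β/2) := Real.exp_pos _
  have he : t = Real.exp (β/2) * Real.exp (β/2) := by
    rw [hts, ← Real.exp_add]; ring_nf
  have h1 : Real.cosh (β/2) / Real.sinh (β/2) = (t + 1)/(t - 1) := by
    rw [Real.cosh_eq, Real.sinh_eq]
    have hne : Real.exp (β/2) ≠ 0 := ne_of_gt hp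
    have hd : Real.exp (β/2) - Real.exp (-(β/2)) ≠ 0 := by
      have : Real.exp (-(β/2)) < Real.exp (β/2) :=
        Real.exp_lt_exp.mpr (by linarith)
      linarith
    have hinv : Real.exp (-(β/2)) = (Real.exp (β/2))⁻¹ := Real.exp_neg _
    rw [he, hinv]
    have htne : Real.exp (β/2) * Real.exp (β/2) - 1 ≠ 0 := by
      rw [← he]; linarith
    field_simp
  rw [h1]
  have hquot : 0 < (t + 1)/(t - 1) := by
    apply div_pos <;> linarith
  have hlog : Real.log ((t + 1)/(t - 1)) < Real.log (1 + Real.sqrt 2) ↔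
      (t + 1)/(t - 1) < 1 + Real.sqrt 2 := Real.log_lt_log_iff hquot hA
  rw [hlog, Real.log_lt_iff_lt_exp hA, ← hts, div_lt_iff₀ (by linarith : (0:ℝ) < t - 1)]
  constructor
  · intro h; nlinarith
  · intro h; nlinarith
end

section
/- Edwards–Sokal identity: for p = 1 - e^{-β}, summing the joint weight W(σ,ω) := ∏_{e={u,v}∈ω} p·1[σ(u)=σ(v)] · ∏_{e∈E∖ω} (1-p) over all spin configurations σ ∈ {-1,1}^V yields p^{|ω|}(1-p)^{|E|-|ω|}·2^{C(ω)}, where C(ω) is the number of connected components of the graph (V,ω). -/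
/-- The Edwards–Sokal joint weight of a spin configuration `σ` and an edge subset `ω`. -/
noncomputable def esWeight {V : Type*} [Fintype V] [DecidableEq V]
    (G : SimpleGraph V) [DecidableRel G.Adj] (p : ℝ) (σ : V → ℤˣ)
    (ω : Finset (Sym2 V)) : ℝ :=
  (∏ e ∈ ω, p * (if ∀ x ∈ e, ∀ y ∈ e, σ x = σ y then 1 else 0)) *
    (1 - p) ^ (G.edgeFinset \ ω).card

/-- The number of connected components of the graph with edge set `ω`. -/
noncomputable def numComponents {V : Type*} (ω : Finset (Sym2 V)) : ℕ :=
  Nat.card (SimpleGraph.fromEdgeSet (↑ω : Set (Sym2 V))).ConnectedComponent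

theorem edwards_sokal_spin_sum {V : Type*} [Fintype V] [DecidableEq V]
    (G : SimpleGraph V) [DecidableRel G.Adj] (β : ℝ) (hβ : 0 < β) (p : ℝ)
    (hp : p = 1 - Real.exp (-β)) (ω : Finset (Sym2 V)) (hω : ω ⊆ G.edgeFinset) :
    ∑ σ : V → ℤˣ, esWeight G p σ ω =
      p ^ ω.card * (1 - p) ^ (G.edgeFinset.card - ω.card) * 2 ^ numComponents ω := by
  classical
  set H := SimpleGraph.fromEdgeSet (↑ω : Set (Sym2 V)) with hH
  set P : (V → ℤˣ) → Prop := fun σ => ∀ e ∈ ω, ∀ x ∈ e, ∀ y ∈ e, σ x = σ y with hP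
  -- the equiv between satisfying σ and functions on components
  have hequiv : {σ : V → ℤˣ // P σ} ≃ (H.ConnectedComponent → ℤˣ) := by
    refine
      { toFun := fun s => SimpleGraph.ConnectedComponent.lift s.1 ?_
        invFun := fun f => ⟨fun v => f (H.connectedComponentMk v), ?_⟩
        left_inv := ?_
        right_inv := ?_ }
    · rintro v w q -
      induction q with
      | nil => rfl
      | @cons a b c hadj _ ih =>
        have he : s(a, b) ∈ ω := by
          have := hadj
          rw [SimpleGraph.fromEdgeSet_adj] at this
          exact this.1
        have : s.1 a = s.1 b :=
          s.2 _ he a (by simp) b (by simp)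
        exact this.trans ih
    · intro e he x hx y hy
      by_cases hxy : x = y
      · rw [hxy]
      · have hadj : H.Adj x y := by
          rw [hH, SimpleGraph.fromEdgeSet_adj]
          refine ⟨?_, hxy⟩
          have : e = s(x, y) := (Sym2.mem_and_mem_iff hxy).mp ⟨hx, hy⟩
          simpa [← this] using he
        exact congrArg f (SimpleGraph.ConnectedComponent.connectedComponentMk_eq_of_adj hadj)
    · intro s; ext v; rfl
    · intro f; funext c
      refine SimpleGraph.ConnectedComponent.ind (fun v => ?_) c
      rfl
  -- counting
  have hcount : ((Finset.univ : Finset (V → ℤˣ)).filter P).card = 2 ^ numComponents ω := by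
    have h1 : ((Finset.univ : Finset (V → ℤˣ)).filter P).card = Nat.card {σ : V → ℤˣ // P σ} := by
      rw [Nat.card_eq_fintype_card, Fintype.card_subtype]
    rw [h1, Nat.card_congr hequiv, Nat.card_fun]
    have : Nat.card ℤˣ = 2 := by
      rw [Nat.card_eq_fintype_card, Fintype.card_units_int]
    rw [this]
    rfl
  -- rewrite each weight
  have hw : ∀ σ : V → ℤˣ,
      esWeight G p σ ω =
        p ^ ω.card * (1 - p) ^ (G.edgeFinset.card - ω.card) * (if P σ then (1:ℝ) else 0) := by
    intro σ
    have hprod : (∏ e ∈ ω, p * (if ∀ x ∈ e, ∀ y ∈ e, σ x = σ y then (1:ℝ) else 0))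
        = p ^ ω.card * (if P σ then (1:ℝ) else 0) := by
      rw [Finset.prod_mul_distrib, Finset.prod_const]
      congr 1
      rw [Finset.prod_boole]
      simp [hP]
    have hsd : (G.edgeFinset \ ω).card = G.edgeFinset.card - ω.card := Finset.card_sdiff_of_subset hω
    rw [esWeight, hprod, hsd]
    ring
  rw [Finset.sum_congr rfl fun σ _ => hw σ, ← Finset.mul_sum, Finset.sum_boole, hcount]
  push_cast
  ring
end

section
/- Edwards–Sokal identity (spin marginal): for p = 1 - e^{-β}, summing W(σ,ω) over all ω ⊆ E yields (1-p)^{|E|} · e^{β·#{e={u,v}∈E : σ(u)=σ(v)}}, which is proportional to the unnormalized Ising weight of σ. -/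
/-- Number of edges of `G` on which the spin configuration `σ` agrees. -/
noncomputable def agreeCount {V : Type*} [Fintype V] [DecidableEq V]
    (G : SimpleGraph V) [DecidableRel G.Adj] (σ : V → ℤˣ) : ℕ :=
  (G.edgeFinset.filter (fun e => ∀ x ∈ e, ∀ y ∈ e, σ x = σ y)).card

theorem edwards_sokal_edge_sum {V : Type*} [Fintype V] [DecidableEq V]
    (G : SimpleGraph V) [DecidableRel G.Adj] (β : ℝ) (hβ : 0 < β) (p : ℝ)
    (hp : p = 1 - Real.exp (-β)) (σ : V → ℤˣ) :
    ∑ ω ∈ G.edgeFinset.powerset, esWeight G p σ ω =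
      Real.exp (β * agreeCount G σ) * Real.exp (-(β * G.edgeFinset.card)) := by
  classical
  have key : ∑ ω ∈ G.edgeFinset.powerset, esWeight G p σ ω =
      ∏ e ∈ G.edgeFinset,
        ((p * (if ∀ x ∈ e, ∀ y ∈ e, σ x = σ y then 1 else 0)) + (1 - p)) := by
    rw [Finset.prod_add]
    refine Finset.sum_congr rfl fun ω hω => ?_
    rw [esWeight, Finset.prod_const]
  rw [key, ← Finset.prod_filter_mul_prod_filter_not G.edgeFinset
    (fun e => ∀ x ∈ e, ∀ y ∈ e, σ x = σ y)]
  have h1 : ∏ e ∈ G.edgeFinset.filter (fun e => ∀ x ∈ e, ∀ y ∈ e, σ x = σ y),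
      ((p * (if ∀ x ∈ e, ∀ y ∈ e, σ x = σ y then 1 else 0)) + (1 - p)) = 1 := by
    refine Finset.prod_eq_one fun e he => ?_
    rw [Finset.mem_filter] at he
    rw [if_pos he.2]; ring
  have h2 : ∏ e ∈ G.edgeFinset.filter (fun e => ¬ ∀ x ∈ e, ∀ y ∈ e, σ x = σ y),
      ((p * (if ∀ x ∈ e, ∀ y ∈ e, σ x = σ y then 1 else 0)) + (1 - p)) =
      Real.exp (-β) ^ (G.edgeFinset.filter (fun e => ¬ ∀ x ∈ e, ∀ y ∈ e, σ x = σ y)).card := by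
    rw [Finset.prod_congr rfl (fun e he => ?_), Finset.prod_const]
    rw [Finset.mem_filter] at he
    rw [if_neg he.2, hp]; ring
  rw [h1, h2, one_mul]
  have hcard : (G.edgeFinset.filter (fun e => ¬ ∀ x ∈ e, ∀ y ∈ e, σ x = σ y)).card =
      G.edgeFinset.card - agreeCount G σ := by
    have := Finset.card_filter_add_card_filter_not
      (s := G.edgeFinset) (p := fun e => ∀ x ∈ e, ∀ y ∈ e, σ x = σ y)
    unfold agreeCount
    omega
  have hle : agreeCount G σ ≤ G.edgeFinset.card :=
    Finset.card_filter_le _ _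
  rw [hcard, ← Real.exp_nat_mul, ← Real.exp_add]
  congr 1
  push_cast [hle]
  ring
end
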